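/- For every integer m ≥ 1, as t → ∞ the average path length d_t of the Koch network K_{m,t} satisfies d_t / t → 4m/(3m+1). -/

import Mathlib

/-- The triangles of the Koch network `K_{m,t}`: at step `t+1`, each old triangle survives and
each (triangle, corner, group) creates a new triangle. -/
def KochTri (m : ℕ) : ℕ → Type
  | 0 => Unit
  | t+1 => KochTri m t ⊕ (KochTri m t × Fin 3 × Fin m)

/-- The vertices of the Koch network `K_{m,t}`: at step `t+1`, each (triangle, corner, group)
creates two new vertices. -/
def KochVertex (m : ℕ) : ℕ → Type
  | 0 => Fin 3
  | t+1 => KochVertex m t ⊕ (KochTri m t × Fin 3 × Fin m × Fin 2)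

/-- The three corner vertices of each triangle. -/
def KochCorner (m : ℕ) : ∀ t, KochTri m t → Fin 3 → KochVertex m t
  | 0, _, i => i
  | t+1, Sum.inl τ, i => Sum.inl (KochCorner m t τ i)
  | t+1, Sum.inr (τ, c, g), i =>
      ![Sum.inl (KochCorner m t τ c), Sum.inr (τ, c, g, 0), Sum.inr (τ, c, g, 1)] i

instance KochTri.instDecidableEq (m : ℕ) : ∀ t, DecidableEq (KochTri m t)
  | 0 => inferInstanceAs (DecidableEq Unit)
  | t+1 =>
    letI := KochTri.instDecidableEq m t
    inferInstanceAs (DecidableEq (KochTri m t ⊕ (KochTri m t × Fin 3 × Fin m)))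

instance KochVertex.instDecidableEq (m : ℕ) : ∀ t, DecidableEq (KochVertex m t)
  | 0 => inferInstanceAs (DecidableEq (Fin 3))
  | t+1 =>
    letI := KochVertex.instDecidableEq m t
    letI := KochTri.instDecidableEq m t
    inferInstanceAs (DecidableEq (KochVertex m t ⊕ (KochTri m t × Fin 3 × Fin m × Fin 2)))

instance KochTri.instFintype (m : ℕ) : ∀ t, Fintype (KochTri m t)
  | 0 => inferInstanceAs (Fintype Unit)
  | t+1 =>
    letI := KochTri.instFintype m t
    inferInstanceAs (Fintype (KochTri m t ⊕ (KochTri m t × Fin 3 × Fin m)))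

instance KochVertex.instFintype (m : ℕ) : ∀ t, Fintype (KochVertex m t)
  | 0 => inferInstanceAs (Fintype (Fin 3))
  | t+1 =>
    letI := KochVertex.instFintype m t
    letI := KochTri.instFintype m t
    inferInstanceAs (Fintype (KochVertex m t ⊕ (KochTri m t × Fin 3 × Fin m × Fin 2)))

/-- The Koch network `K_{m,t}`: two distinct vertices are adjacent iff they are corners of a
common triangle. -/
def KochGraph (m t : ℕ) : SimpleGraph (KochVertex m t) where
  Adj u v := u ≠ v ∧ ∃ (τ : KochTri m t) (i j : Fin 3),
      KochCorner m t τ i = u ∧ KochCorner m t τ j = v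
  symm := ⟨by rintro u v ⟨hne, τ, i, j, hi, hj⟩; exact ⟨hne.symm, τ, j, i, hj, hi⟩⟩
  loopless := ⟨by rintro u ⟨hne, -⟩; exact hne rfl⟩

instance (m t : ℕ) : DecidableRel (KochGraph m t).Adj := fun u v =>
  inferInstanceAs (Decidable (u ≠ v ∧ ∃ (τ : KochTri m t) (i j : Fin 3),
      KochCorner m t τ i = u ∧ KochCorner m t τ j = v))

/-- The step at which a vertex of `K_{m,t}` was added (initial vertices are added at step 0). -/
def KochBirth (m : ℕ) : ∀ t, KochVertex m t → ℕ
  | 0, _ => 0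
  | t+1, Sum.inl v => KochBirth m t v
  | t+1, Sum.inr _ => t+1

/-- The canonical inclusion of `K_{m,t}` into `K_{m,t+1}`. -/
def KochInl (m t : ℕ) (v : KochVertex m t) : KochVertex m (t+1) := Sum.inl v

/-- The other member of the group of two with which a (non-initial) vertex was added. -/
def KochSibling (m : ℕ) : ∀ t, KochVertex m t → KochVertex m t
  | 0, v => v
  | t+1, Sum.inl v => Sum.inl (KochSibling m t v)
  | t+1, Sum.inr (τ, c, g, p) => Sum.inr (τ, c, g, if p = 0 then 1 else 0)

/-- The father vertex of a (non-initial) vertex: the existing vertex to which its group of two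
was attached. -/
def KochFather (m : ℕ) : ∀ t, KochVertex m t → KochVertex m t
  | 0, v => v
  | t+1, Sum.inl v => Sum.inl (KochFather m t v)
  | t+1, Sum.inr (τ, c, _, _) => Sum.inl (KochCorner m t τ c)


/-!
Projecting every vertex born at step `t + 1` onto the old vertex its group hangs from is a
retraction of `K_{m,t+1}` onto `K_{m,t}` that preserves old distances and costs exactly one step
per new endpoint, up to a bounded correction inside each group. Summing this over pairs of
vertices, and over pairs of (triangle, corner) incidences — the multiplicity with which new
groups are attached — closes up into linear recursions for three distance sums. Solving them
gives `∑ d(u, v) = (16 m t + O(1)) (3m+1)^(2t) / (3m+1)` over `N_t = 2 (3m+1)^t + 1` vertices,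
so `d_t / t → 4m / (3m+1)`.
-/

namespace SimpleGraph

variable {V W : Type*} {G : SimpleGraph V} {H : SimpleGraph W}

theorem Walk.exists_walk_length_le_of_eq_or_adj {f : V → W}
    (hf : ∀ ⦃x y⦄, G.Adj x y → f x = f y ∨ H.Adj (f x) (f y)) {x y : V} (p : G.Walk x y) :
    ∃ q : H.Walk (f x) (f y), q.length ≤ p.length := by
  induction p with
  | nil => exact ⟨.nil, le_rfl⟩
  | cons h _ ih =>
    obtain ⟨q, hq⟩ := ih
    rcases hf h with heq | hadj
    · exact ⟨q.copy heq.symm rfl, by simpa using hq.trans (Nat.le_succ _)⟩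
    · exact ⟨q.cons hadj, by simpa using hq⟩

theorem Reachable.dist_le_of_eq_or_adj {f : V → W}
    (hf : ∀ ⦃x y⦄, G.Adj x y → f x = f y ∨ H.Adj (f x) (f y)) {x y : V} (h : G.Reachable x y) :
    H.dist (f x) (f y) ≤ G.dist x y := by
  obtain ⟨p, hp⟩ := h.exists_walk_length_eq_dist
  obtain ⟨q, hq⟩ := p.exists_walk_length_le_of_eq_or_adj hf
  exact hp ▸ (dist_le q).trans hq

theorem Reachable.dist_eq_dist_add_dist_of_exit {S : Set V} {c x y : V}
    (hS : ∀ ⦃a b⦄, a ∈ S → b ∉ S → G.Adj a b → b = c) (h : G.Reachable x y) (hx : x ∈ S)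
    (hy : y ∉ S) : G.dist x y = G.dist x c + G.dist c y := by
  classical
  obtain ⟨p, hp⟩ := h.exists_walk_length_eq_dist
  obtain ⟨d, hd, hdS, hdS'⟩ := p.exists_boundary_dart S hx hy
  have hc : c ∈ p.support := hS hdS hdS' d.adj ▸ p.dart_snd_mem_support_of_mem_darts hd
  refine le_antisymm ((p.takeUntil c hc).reachable.dist_triangle_left y) ?_
  rw [← hp, ← p.take_spec hc, Walk.length_append]
  exact add_le_add (dist_le _) (dist_le _)

noncomputable def distSum {I J : Type*} [Fintype I] [Fintype J] (G : SimpleGraph V) (φ : I → V)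
    (ψ : J → V) : ℝ :=
  ∑ i, ∑ j, (G.dist (φ i) (ψ j) : ℝ)

variable {I J K L : Type*} [Fintype I] [Fintype J] [Fintype K] [Fintype L]

theorem distSum_comm (φ : I → V) (ψ : J → V) : G.distSum φ ψ = G.distSum ψ φ := by
  rw [distSum, distSum, Finset.sum_comm]
  simp_rw [dist_comm]

theorem distSum_eq_of_sum_comp_left {φ : I → V} {α : K → V} {β : L → V} {b : ℝ}
    (h : ∀ F : V → ℝ, ∑ i, F (φ i) = ∑ k, F (α k) + b * ∑ l, F (β l)) (ψ : J → V) :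
    G.distSum φ ψ = G.distSum α ψ + b * G.distSum β ψ :=
  h fun v => ∑ j, (G.dist v (ψ j) : ℝ)

theorem distSum_eq_of_sum_comp_right {ψ : J → V} {α : K → V} {β : L → V} {b : ℝ}
    (h : ∀ F : V → ℝ, ∑ j, F (ψ j) = ∑ k, F (α k) + b * ∑ l, F (β l)) (φ : I → V) :
    G.distSum φ ψ = G.distSum φ α + b * G.distSum φ β := by
  rw [distSum_comm, distSum_eq_of_sum_comp_left h, distSum_comm α, distSum_comm β]

end SimpleGraph

namespace KochGraph

variable {m t : ℕ}

@[simp] theorem inl_inj {u v : KochVertex m t} :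
    @Eq (KochVertex m (t+1)) (Sum.inl u) (Sum.inl v) ↔ u = v :=
  Sum.inl_injective.eq_iff

@[simp] theorem inr_inj {a b : KochTri m t × Fin 3 × Fin m × Fin 2} :
    @Eq (KochVertex m (t+1)) (Sum.inr a) (Sum.inr b) ↔ a = b :=
  Sum.inr_injective.eq_iff

theorem corner_succ_inr (τ : KochTri m t) (c : Fin 3) (g : Fin m) (i : Fin 3) :
    KochCorner m (t+1) (Sum.inr (τ, c, g)) i =
      ![Sum.inl (KochCorner m t τ c), Sum.inr (τ, c, g, 0), Sum.inr (τ, c, g, 1)] i := rfl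

theorem adj_inl_inl {u v : KochVertex m t} :
    (KochGraph m (t+1)).Adj (Sum.inl u) (Sum.inl v) ↔ (KochGraph m t).Adj u v := by
  constructor
  · rintro ⟨hne, τ | ⟨τ, c, g⟩, i, j, hi, hj⟩
    · exact ⟨fun h => hne (congrArg Sum.inl h), τ, i, j, Sum.inl.inj hi, Sum.inl.inj hj⟩
    · rw [corner_succ_inr] at hi hj
      fin_cases i <;> fin_cases j <;> simp_all
  · rintro ⟨hne, τ, i, j, hi, hj⟩
    exact ⟨fun h => hne (Sum.inl.inj h), Sum.inl τ, i, j, congrArg Sum.inl hi,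
      congrArg Sum.inl hj⟩

theorem adj_inl_inr {u : KochVertex m t} {τ : KochTri m t} {c : Fin 3} {g : Fin m} {p : Fin 2} :
    (KochGraph m (t+1)).Adj (Sum.inl u) (Sum.inr (τ, c, g, p)) ↔ u = KochCorner m t τ c := by
  constructor
  · rintro ⟨-, τ' | ⟨τ', c', g'⟩, i, j, hi, hj⟩
    · cases hj
    · rw [corner_succ_inr] at hi hj
      fin_cases i <;> fin_cases j <;> simp_all
  · rintro rfl
    refine ⟨Sum.inl_ne_inr, Sum.inr (τ, c, g), 0, p.succ, rfl, ?_⟩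
    fin_cases p <;> rfl

theorem adj_inr_inr {τ τ' : KochTri m t} {c c' : Fin 3} {g g' : Fin m} {p p' : Fin 2} :
    (KochGraph m (t+1)).Adj (Sum.inr (τ, c, g, p)) (Sum.inr (τ', c', g', p')) ↔
      (τ, c, g) = (τ', c', g') ∧ p ≠ p' := by
  constructor
  · rintro ⟨hne, τ'' | ⟨τ'', c'', g''⟩, i, j, hi, hj⟩
    · cases hj
    · rw [corner_succ_inr] at hi hj
      fin_cases i <;> fin_cases j <;> simp at hi hj <;>
        obtain ⟨rfl, rfl, rfl, rfl⟩ := hi <;> obtain ⟨rfl, rfl, rfl, rfl⟩ := hj <;>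
        first | exact (hne rfl).elim | simp
  · rintro ⟨h, hp⟩
    simp only [Prod.mk.injEq] at h
    obtain ⟨rfl, rfl, rfl⟩ := h
    refine ⟨fun h => hp (by simpa using h), Sum.inr (τ, c, g), p.succ, p'.succ, ?_, ?_⟩ <;>
      fin_cases p <;> fin_cases p' <;> rfl

def retract : KochVertex m (t+1) → KochVertex m t
  | Sum.inl v => v
  | Sum.inr (τ, c, _, _) => KochCorner m t τ c

theorem retract_eq_or_adj ⦃x y : KochVertex m (t+1)⦄ (h : (KochGraph m (t+1)).Adj x y) :
    retract x = retract y ∨ (KochGraph m t).Adj (retract x) (retract y) := by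
  rcases x with u | ⟨τ, c, g, p⟩ <;> rcases y with v | ⟨τ', c', g', p'⟩
  · exact .inr (adj_inl_inl.mp h)
  · exact .inl (adj_inl_inr.mp h)
  · exact .inl (adj_inl_inr.mp h.symm).symm
  · simp only [adj_inr_inr, Prod.mk.injEq] at h
    obtain ⟨⟨rfl, rfl, rfl⟩, -⟩ := h
    exact .inl rfl

theorem connected (m : ℕ) : ∀ t, (KochGraph m t).Connected
  | 0 => (SimpleGraph.connected_iff _).mpr ⟨fun u v => by
      by_cases h : u = v
      · exact h ▸ .refl u
      · exact SimpleGraph.Adj.reachable ⟨h, (), u, v, rfl, rfl⟩, ⟨(0 : Fin 3)⟩⟩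
  | t+1 => by
    have ih := connected m t
    have hr (x : KochVertex m (t+1)) :
        (KochGraph m (t+1)).Reachable x (Sum.inl (retract x)) := by
      rcases x with u | ⟨τ, c, g, p⟩
      · exact .refl _
      · exact (adj_inl_inr.mpr rfl).symm.reachable
    refine (SimpleGraph.connected_iff _).mpr ⟨fun x y => ?_, ih.nonempty.map Sum.inl⟩
    have hold := (ih (retract x) (retract y)).map
      (⟨Sum.inl, adj_inl_inl.mpr⟩ : KochGraph m t →g KochGraph m (t+1))
    exact (hr x).trans (hold.trans (hr y).symm)

theorem dist_inl_inl (u v : KochVertex m t) :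
    (KochGraph m (t+1)).dist (Sum.inl u) (Sum.inl v) = (KochGraph m t).dist u v :=
  le_antisymm
    ((connected m t u v).dist_le_of_eq_or_adj fun _ _ h => .inr (adj_inl_inl.mpr h))
    ((connected m (t+1) (Sum.inl u) (Sum.inl v)).dist_le_of_eq_or_adj (f := retract)
      retract_eq_or_adj)

theorem dist_inr_eq_dist_add_one {τ : KochTri m t} {c : Fin 3} {g : Fin m} (p : Fin 2)
    {y : KochVertex m (t+1)} (hy : ∀ p', y ≠ Sum.inr (τ, c, g, p')) :
    (KochGraph m (t+1)).dist (Sum.inr (τ, c, g, p)) y =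
      (KochGraph m (t+1)).dist (Sum.inl (KochCorner m t τ c)) y + 1 := by
  have hexit : ∀ ⦃a b : KochVertex m (t+1)⦄, a ∈ Set.range (fun q => Sum.inr (τ, c, g, q)) →
      b ∉ Set.range (fun q => Sum.inr (τ, c, g, q)) → (KochGraph m (t+1)).Adj a b →
      b = Sum.inl (KochCorner m t τ c) := by
    rintro _ (v | ⟨τ', c', g', p'⟩) ⟨q, rfl⟩ hb hadj
    · exact congrArg Sum.inl (adj_inl_inr.mp hadj.symm)
    · obtain ⟨h, -⟩ := adj_inr_inr.mp hadj
      simp only [Prod.mk.injEq] at h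
      obtain ⟨rfl, rfl, rfl⟩ := h
      exact (hb ⟨p', rfl⟩).elim
  rw [(connected m (t+1) _ y).dist_eq_dist_add_dist_of_exit hexit ⟨p, rfl⟩
    (by rintro ⟨q, rfl⟩; exact hy q rfl), SimpleGraph.dist_eq_one_iff_adj.mpr
    (adj_inl_inr.mpr rfl).symm, add_comm]

theorem dist_inr_inl (τ : KochTri m t) (c : Fin 3) (g : Fin m) (p : Fin 2)
    (v : KochVertex m t) :
    (KochGraph m (t+1)).dist (Sum.inr (τ, c, g, p)) (Sum.inl v) =
      (KochGraph m t).dist (KochCorner m t τ c) v + 1 := by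
  rw [dist_inr_eq_dist_add_one p fun _ => Sum.inl_ne_inr, dist_inl_inl]

theorem dist_inl_inr (u : KochVertex m t) (τ : KochTri m t) (c : Fin 3) (g : Fin m)
    (p : Fin 2) :
    (KochGraph m (t+1)).dist (Sum.inl u) (Sum.inr (τ, c, g, p)) =
      (KochGraph m t).dist (KochCorner m t τ c) u + 1 :=
  SimpleGraph.dist_comm.trans (dist_inr_inl τ c g p u)

theorem dist_inr_inr_of_ne {τ τ' : KochTri m t} {c c' : Fin 3} {g g' : Fin m} (p p' : Fin 2)
    (h : (τ, c, g) ≠ (τ', c', g')) :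
    (KochGraph m (t+1)).dist (Sum.inr (τ, c, g, p)) (Sum.inr (τ', c', g', p')) =
      (KochGraph m t).dist (KochCorner m t τ c) (KochCorner m t τ' c') + 2 := by
  have hne : ∀ a b : Fin 2,
      @Ne (KochVertex m (t+1)) (Sum.inr (τ, c, g, a)) (Sum.inr (τ', c', g', b)) :=
    fun a b hab => h (by simp_all)
  rw [dist_inr_eq_dist_add_one p fun q => (hne q p').symm, dist_inl_inr,
    SimpleGraph.dist_comm (G := KochGraph m t)]

def newIndicator : KochVertex m (t+1) → ℕ
  | Sum.inl _ => 0
  | Sum.inr _ => 1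

/- The two vertices of a group retract to the same vertex, so the retraction formula below
would put them at distance `2` instead of `0` or `1`. -/
def groupCorrection : KochVertex m (t+1) → KochVertex m (t+1) → ℕ
  | Sum.inr (τ, c, g, p), Sum.inr (τ', c', g', p') =>
      if (τ, c, g) = (τ', c', g') then (if p = p' then 2 else 1) else 0
  | _, _ => 0

@[simp] theorem groupCorrection_inl_left (u : KochVertex m t) (y : KochVertex m (t+1)) :
    groupCorrection (Sum.inl u) y = 0 := by
  cases y <;> rfl

@[simp] theorem groupCorrection_inl_right (x : KochVertex m (t+1)) (u : KochVertex m t) :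
    groupCorrection x (Sum.inl u) = 0 := by
  cases x <;> rfl

theorem dist_add_groupCorrection (x y : KochVertex m (t+1)) :
    (KochGraph m (t+1)).dist x y + groupCorrection x y =
      (KochGraph m t).dist (retract x) (retract y) + newIndicator x + newIndicator y := by
  rcases x with u | ⟨τ, c, g, p⟩ <;> rcases y with v | ⟨τ', c', g', p'⟩
  · exact dist_inl_inl u v
  · rw [dist_inl_inr, SimpleGraph.dist_comm (G := KochGraph m t)]
    rfl
  · exact congrArg (· + 0) (dist_inr_inl τ c g p v)
  · by_cases h : (τ, c, g) = (τ', c', g')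
    · simp only [Prod.mk.injEq] at h
      obtain ⟨rfl, rfl, rfl⟩ := h
      by_cases hp : p = p'
      · subst hp
        have hself : (KochGraph m (t+1)).dist (Sum.inr (τ, c, g, p)) (Sum.inr (τ, c, g, p)) = 0 :=
          SimpleGraph.dist_self
        simp [groupCorrection, newIndicator, retract, hself]
      · rw [SimpleGraph.dist_eq_one_iff_adj.mpr (adj_inr_inr.mpr ⟨rfl, hp⟩)]
        simp [groupCorrection, newIndicator, retract, hp]
    · rw [dist_inr_inr_of_ne p p' h]
      simp [groupCorrection, newIndicator, retract, h]

theorem card_tri (m t : ℕ) : Fintype.card (KochTri m t) = (3*m+1)^t := by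
  induction t with
  | zero => rfl
  | succ t ih =>
    change Fintype.card (KochTri m t ⊕ (KochTri m t × Fin 3 × Fin m)) = _
    simp only [Fintype.card_sum, Fintype.card_prod, Fintype.card_fin, ih]
    ring

theorem card_vertex (m t : ℕ) : Fintype.card (KochVertex m t) = 2*(3*m+1)^t + 1 := by
  induction t with
  | zero => rfl
  | succ t ih =>
    change Fintype.card (KochVertex m t ⊕ (KochTri m t × Fin 3 × Fin m × Fin 2)) = _
    simp only [Fintype.card_sum, Fintype.card_prod, Fintype.card_fin, ih, card_tri]
    ring

/- Sampling vertices through `corners` counts each vertex once per triangle containing it,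
which is the multiplicity with which new groups are attached to it. -/
abbrev corners (m t : ℕ) : KochTri m t × Fin 3 → KochVertex m t :=
  Function.uncurry (KochCorner m t)

theorem sum_vertex_succ (f : KochVertex m (t+1) → ℝ) :
    ∑ x, f x = ∑ u, f (Sum.inl u) + ∑ τ : KochTri m t, ∑ c : Fin 3, ∑ g : Fin m,
      (f (Sum.inr (τ, c, g, 0)) + f (Sum.inr (τ, c, g, 1))) := by
  refine (Fintype.sum_sum_type f).trans ?_
  simp only [Fintype.sum_prod_type, Fin.sum_univ_two]

theorem sum_corners_succ (f : KochVertex m (t+1) → ℝ) :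
    ∑ q, f (corners m (t+1) q) =
      ∑ τ : KochTri m t, ∑ c : Fin 3, f (Sum.inl (KochCorner m t τ c)) +
      ∑ τ : KochTri m t, ∑ c : Fin 3, ∑ g : Fin m,
        (f (Sum.inl (KochCorner m t τ c)) + f (Sum.inr (τ, c, g, 0)) +
          f (Sum.inr (τ, c, g, 1))) := by
  rw [Fintype.sum_prod_type]
  refine (Fintype.sum_sum_type fun T => ∑ i, f (KochCorner m (t+1) T i)).trans ?_
  simp only [Fintype.sum_prod_type, Fin.sum_univ_three]
  rfl

theorem sum_retract (F : KochVertex m t → ℝ) :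
    ∑ x, F (retract x) = ∑ u, F u + 2 * m * ∑ q, F (corners m t q) := by
  simp [sum_vertex_succ, retract, Fintype.sum_prod_type, Finset.mul_sum]
  exact Finset.sum_congr rfl fun _ _ => Finset.sum_congr rfl fun _ _ => by ring

theorem sum_retract_corners (F : KochVertex m t → ℝ) :
    ∑ q, F (retract (corners m (t+1) q)) =
      ∑ q, F (corners m t q) + 3 * m * ∑ q, F (corners m t q) := by
  refine (sum_corners_succ fun x => F (retract x)).trans ?_
  simp [retract, Fintype.sum_prod_type, Finset.mul_sum]
  exact Finset.sum_congr rfl fun _ _ => Finset.sum_congr rfl fun _ _ => by ring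

theorem sum_corners_succ_of_inl (F : KochVertex m (t+1) → ℝ) (hF : ∀ u, F (Sum.inl u) = 0) :
    ∑ q, F (corners m (t+1) q) = ∑ x, F x := by
  simp [sum_corners_succ, sum_vertex_succ, hF]

theorem sum_newIndicator :
    ∑ x : KochVertex m (t+1), (newIndicator x : ℝ) = 6 * m * (3*m+1)^t := by
  simp [sum_vertex_succ, newIndicator, card_tri]
  ring

theorem sum_corners_newIndicator :
    ∑ q, (newIndicator (corners m (t+1) q) : ℝ) = 6 * m * (3*m+1)^t :=
  (sum_corners_succ_of_inl _ fun _ => Nat.cast_zero).trans sum_newIndicator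

theorem sum_groupCorrection :
    ∑ x : KochVertex m (t+1), ∑ y, (groupCorrection x y : ℝ) = 18 * m * (3*m+1)^t := by
  simp [sum_vertex_succ, groupCorrection, Prod.ext_iff, ite_and, Finset.sum_add_distrib,
    Finset.sum_ite_eq, card_tri]
  ring

theorem sum_corners_groupCorrection :
    ∑ q, ∑ y, (groupCorrection (corners m (t+1) q) y : ℝ) = 18 * m * (3*m+1)^t :=
  (sum_corners_succ_of_inl _ fun _ => by simp).trans sum_groupCorrection

theorem sum_corners_groupCorrection_corners :
    ∑ q, ∑ q', (groupCorrection (corners m (t+1) q) (corners m (t+1) q') : ℝ) =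
      18 * m * (3*m+1)^t :=
  (Finset.sum_congr rfl fun _ _ => sum_corners_succ_of_inl _ fun _ => by simp).trans
    sum_corners_groupCorrection

theorem distSum_succ {I J : Type*} [Fintype I] [Fintype J] (φ : I → KochVertex m (t+1))
    (ψ : J → KochVertex m (t+1)) :
    (KochGraph m (t+1)).distSum φ ψ + ∑ i, ∑ j, (groupCorrection (φ i) (ψ j) : ℝ) =
      (KochGraph m t).distSum (retract ∘ φ) (retract ∘ ψ) +
        Fintype.card J * ∑ i, (newIndicator (φ i) : ℝ) +
        Fintype.card I * ∑ j, (newIndicator (ψ j) : ℝ) := by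
  have hpt (i : I) (j : J) :
      ((KochGraph m (t+1)).dist (φ i) (ψ j) : ℝ) + groupCorrection (φ i) (ψ j) =
        (KochGraph m t).dist (retract (φ i)) (retract (ψ j)) + newIndicator (φ i) +
          newIndicator (ψ j) := by
    exact_mod_cast dist_add_groupCorrection (φ i) (ψ j)
  simp only [SimpleGraph.distSum, ← Finset.sum_add_distrib, hpt]
  simp only [Finset.sum_add_distrib, Finset.sum_const, Finset.card_univ, nsmul_eq_mul,
    Function.comp_apply, Finset.mul_sum]

theorem distSum_vertices_succ :
    (KochGraph m (t+1)).distSum id id + 18 * m * (3*m+1)^t =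
      (KochGraph m t).distSum id id + 4 * m * (KochGraph m t).distSum (corners m t) id +
        4 * m ^ 2 * (KochGraph m t).distSum (corners m t) (corners m t) +
        12 * m * (3*m+1)^t * (2 * (3*m+1)^(t+1) + 1) := by
  have h := distSum_succ (m := m) (t := t) id id
  rw [Function.comp_id, SimpleGraph.distSum_eq_of_sum_comp_left (α := id) sum_retract,
    SimpleGraph.distSum_eq_of_sum_comp_right (α := id) sum_retract,
    SimpleGraph.distSum_eq_of_sum_comp_right (α := id) sum_retract,
    SimpleGraph.distSum_comm id (corners m t)] at h
  simp only [id, sum_groupCorrection, sum_newIndicator, card_vertex] at h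
  push_cast at h
  linear_combination h

theorem distSum_corners_vertices_succ :
    (KochGraph m (t+1)).distSum (corners m (t+1)) id + 18 * m * (3*m+1)^t =
      (3 * m + 1) * ((KochGraph m t).distSum (corners m t) id +
        2 * m * (KochGraph m t).distSum (corners m t) (corners m t)) +
        6 * m * (3*m+1)^t * (2 * (3*m+1)^(t+1) + 1) +
        3 * (3*m+1)^(t+1) * (6 * m * (3*m+1)^t) := by
  have h := distSum_succ (m := m) (t := t) (corners m (t+1)) id
  rw [SimpleGraph.distSum_eq_of_sum_comp_left (φ := retract ∘ corners m (t+1))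
      (α := corners m t) sum_retract_corners,
    Function.comp_id, SimpleGraph.distSum_eq_of_sum_comp_right (α := id) sum_retract] at h
  simp only [id, sum_corners_groupCorrection, sum_corners_newIndicator, sum_newIndicator,
    card_vertex, Fintype.card_prod, card_tri, Fintype.card_fin] at h
  push_cast at h
  linear_combination h

theorem distSum_corners_corners_succ :
    (KochGraph m (t+1)).distSum (corners m (t+1)) (corners m (t+1)) + 18 * m * (3*m+1)^t =
      (3 * m + 1) ^ 2 * (KochGraph m t).distSum (corners m t) (corners m t) +
        2 * (3 * (3*m+1)^(t+1)) * (6 * m * (3*m+1)^t) := by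
  have h := distSum_succ (m := m) (t := t) (corners m (t+1)) (corners m (t+1))
  rw [SimpleGraph.distSum_eq_of_sum_comp_left (φ := retract ∘ corners m (t+1))
      (α := corners m t) sum_retract_corners,
    SimpleGraph.distSum_eq_of_sum_comp_right (ψ := retract ∘ corners m (t+1))
      (α := corners m t) sum_retract_corners] at h
  simp only [sum_corners_groupCorrection_corners, sum_corners_newIndicator, Fintype.card_prod,
    card_tri, Fintype.card_fin] at h
  push_cast at h
  linear_combination h

theorem initial_eq_top : KochGraph m 0 = ⊤ := by
  ext u v
  exact ⟨fun h => h.1, fun h => ⟨h, (), u, v, rfl, rfl⟩⟩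

theorem distSum_vertices_zero : (KochGraph m 0).distSum id id = 6 := by
  rw [initial_eq_top]
  simp only [SimpleGraph.distSum, id, SimpleGraph.dist_top]
  change ∑ u : Fin 3, ∑ v : Fin 3, ((if u = v then 0 else 1 : ℕ) : ℝ) = 6
  simp [Fin.sum_univ_three]
  norm_num

theorem sum_corners_zero (F : KochVertex m 0 → ℝ) : ∑ q, F (corners m 0 q) = ∑ u, F u := by
  have : Unique (KochTri m 0) := inferInstanceAs (Unique Unit)
  rw [Fintype.sum_prod_type, Fintype.sum_unique]
  rfl

theorem distSum_corners_vertices_zero : (KochGraph m 0).distSum (corners m 0) id = 6 :=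
  (sum_corners_zero _).trans distSum_vertices_zero

theorem distSum_corners_corners_zero :
    (KochGraph m 0).distSum (corners m 0) (corners m 0) = 6 :=
  (Finset.sum_congr rfl fun _ _ => sum_corners_zero _).trans distSum_corners_vertices_zero

theorem mul_distSum_corners_corners (m t : ℕ) :
    (3 * m + 1) * (KochGraph m t).distSum (corners m t) (corners m t) =
      18 * m * (2 * t + 1) * ((3*m+1)^t)^2 + 6 * (3*m+1)^t := by
  induction t with
  | zero => rw [distSum_corners_corners_zero]; push_cast; ring
  | succ t ih =>
    have h := distSum_corners_corners_succ (m := m) (t := t)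
    rw [pow_succ] at h ⊢
    push_cast
    linear_combination (3 * (m : ℝ) + 1) * h + (3 * (m : ℝ) + 1) ^ 2 * ih

theorem mul_distSum_corners_vertices (m t : ℕ) :
    (3 * m + 1) * (KochGraph m t).distSum (corners m t) id =
      (24 * m * t + 18 * m + 2) * ((3*m+1)^t)^2 + 4 * (3*m+1)^t := by
  induction t with
  | zero => rw [distSum_corners_vertices_zero]; push_cast; ring
  | succ t ih =>
    have h := distSum_corners_vertices_succ (m := m) (t := t)
    rw [pow_succ] at h ⊢
    push_cast
    linear_combination (3 * (m : ℝ) + 1) * h + (3 * (m : ℝ) + 1) * ih +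
      2 * m * (3 * (m : ℝ) + 1) * mul_distSum_corners_corners m t

theorem mul_distSum_vertices (m t : ℕ) :
    3 * (3 * m + 1) * (KochGraph m t).distSum id id =
      (48 * m * t + 48 * m + 8) * ((3*m+1)^t)^2 + (6 * m + 10) * (3*m+1)^t := by
  induction t with
  | zero => rw [distSum_vertices_zero]; push_cast; ring
  | succ t ih =>
    have h := distSum_vertices_succ (m := m) (t := t)
    rw [pow_succ] at h ⊢
    push_cast
    linear_combination 3 * (3 * (m : ℝ) + 1) * h + ih +
      12 * m * mul_distSum_corners_vertices m t + 12 * m ^ 2 * mul_distSum_corners_corners m t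

end KochGraph

/-- For every integer m ≥ 1, as t → ∞ the average path length `d_t` of the Koch
network `K_{m,t}` satisfies `d_t / t → 4m/(3m+1)`. -/
theorem koch_apl_limit (m : ℕ) (hm : 1 ≤ m) :
    Filter.Tendsto (fun t : ℕ =>
        (((∑ u : KochVertex m t, ∑ v : KochVertex m t, ((KochGraph m t).dist u v : ℝ)) / 2) /
            ((Fintype.card (KochVertex m t) : ℝ) *
              ((Fintype.card (KochVertex m t) : ℝ) - 1) / 2)) / (t : ℝ))
      Filter.atTop (nhds (4 * (m : ℝ) / (3 * m + 1))) := by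
  have hb : (1 : ℝ) < 3 * m + 1 := by
    have : (1 : ℝ) ≤ m := by exact_mod_cast hm
    linarith
  have hx : Filter.Tendsto (fun t : ℕ => ((3 * m + 1 : ℝ) ^ t)⁻¹) Filter.atTop (nhds 0) :=
    (tendsto_pow_atTop_atTop_of_one_lt hb).inv_tendsto_atTop
  have ht := tendsto_inv_atTop_nhds_zero_nat (𝕜 := ℝ)
  -- the average path length over `t`, with numerator and denominator divided by `t (3m+1)^(2t)`
  have hlim := (((tendsto_const_nhds (x := 48 * (m : ℝ))).add (ht.const_mul (48 * m + 8 : ℝ))).add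
    ((hx.mul ht).const_mul (6 * m + 10 : ℝ))).div
      ((tendsto_const_nhds (x := (2 : ℝ)).add hx).const_mul (6 * (3 * m + 1 : ℝ))) (by positivity)
  rw [show (48 * m + (48 * m + 8) * 0 + (6 * m + 10) * (0 * 0)) / (6 * (3 * m + 1) * (2 + 0)) =
    4 * (m : ℝ) / (3 * m + 1) by field_simp; ring] at hlim
  refine hlim.congr' ?_
  filter_upwards [Filter.eventually_ne_atTop 0] with t ht0
  have hS : (KochGraph m t).distSum id id = ((48 * m * t + 48 * m + 8) * ((3 * m + 1) ^ t) ^ 2 +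
      (6 * m + 10) * (3 * m + 1) ^ t) / (3 * (3 * m + 1)) := by
    rw [eq_div_iff (by positivity)]
    linear_combination KochGraph.mul_distSum_vertices m t
  change _ = ((KochGraph m t).distSum id id / 2) / _ / _
  rw [hS, KochGraph.card_vertex, Pi.div_apply]
  push_cast
  field_simp
  ring
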